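/- arXiv:1102.5585 — 2 statements merged into one kernel-verified Lean document; each statement's English description precedes it below -/
import Mathlib

section
/- A two-level PT-net system N with transition set T = L ∪ H has the property NDC if and only if N and N\H are language equivalent, i.e., L(N) = L(N\H). -/
/-! ## Labelled transition systems -/

structure LTS (Q : Type _) (A : Type _) where
  init : Q
  tr : Q → A → Q → Prop

namespace LTS

variable {Q Q' A : Type _}

/-- One unobservable step. -/
def TauStep (S : LTS Q A) (Obs : Set A) (q q' : Q) : Prop :=
  ∃ τ, τ ∉ Obs ∧ S.tr q τ q'

/-- `q →* q'` : reflexive-transitive closure of unobservable steps. -/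
def TauStar (S : LTS Q A) (Obs : Set A) : Q → Q → Prop :=
  Relation.ReflTransGen (S.TauStep Obs)

/-- Weak steps producing a word of observable labels. -/
inductive WeakSteps (S : LTS Q A) (Obs : Set A) : Q → List A → Q → Prop
  | nil (q : Q) : WeakSteps S Obs q [] q
  | tau {q q' q'' : Q} {w : List A} {τ : A} :
      τ ∉ Obs → S.tr q τ q' → WeakSteps S Obs q' w q'' → WeakSteps S Obs q w q''
  | obs {q q' q'' : Q} {w : List A} {σ : A} :
      σ ∈ Obs → S.tr q σ q' → WeakSteps S Obs q' w q'' → WeakSteps S Obs q (σ :: w) q''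

/-- The language of a partially observed LTS. -/
def lang (S : LTS Q A) (Obs : Set A) : Set (List A) :=
  { w | ∃ q, S.WeakSteps Obs S.init w q }

end LTS

/-- `R` is a weak simulation of `S` by `S'`. -/
def IsWeakSimulation {Q Q' A : Type _} (Obs : Set A) (S : LTS Q A) (S' : LTS Q' A)
    (R : Q → Q' → Prop) : Prop :=
  R S.init S'.init ∧
  ∀ q1 q1', R q1 q1' →
    (∀ σ ∈ Obs, ∀ q2, S.tr q1 σ q2 →
      ∃ q1'' q2'' q2', S'.TauStar Obs q1' q1'' ∧ S'.tr q1'' σ q2'' ∧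
        S'.TauStar Obs q2'' q2' ∧ R q2 q2') ∧
    (∀ τ ∉ Obs, ∀ q2, S.tr q1 τ q2 →
      ∃ q2', S'.TauStar Obs q1' q2' ∧ R q2 q2')

/-- `S` is weakly simulated by `S'`. -/
def WeaklySimulated {Q Q' A : Type _} (Obs : Set A) (S : LTS Q A) (S' : LTS Q' A) : Prop :=
  ∃ R, IsWeakSimulation Obs S S' R

/-- `R` is a weak bisimulation between `S` and `S'`. -/
def IsWeakBisimulation {Q Q' A : Type _} (Obs : Set A) (S : LTS Q A) (S' : LTS Q' A)
    (R : Q → Q' → Prop) : Prop :=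
  IsWeakSimulation Obs S S' R ∧ IsWeakSimulation Obs S' S (fun q' q => R q q')

/-- `S` and `S'` are weakly bisimilar. -/
def WeaklyBisimilar {Q Q' A : Type _} (Obs : Set A) (S : LTS Q A) (S' : LTS Q' A) : Prop :=
  ∃ R, IsWeakBisimulation Obs S S' R

/-! ## Place/Transition Petri nets -/

/-- A PT-net over a universe `P` of places and `Tr` of transitions:
a finite set of places, a finite set of transitions, and input/output flows.
Flows of non-transitions vanish. -/
structure PTNet (P : Type _) (Tr : Type _) where
  places : Finset P
  transitions : Finset Tr
  pre : Tr → P → ℕ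
  post : Tr → P → ℕ
  pre_eq_zero : ∀ t ∉ transitions, ∀ p, pre t p = 0
  post_eq_zero : ∀ t ∉ transitions, ∀ p, post t p = 0

namespace PTNet

variable {P Tr : Type _} [DecidableEq P] [DecidableEq Tr]

/-- `M[t⟩` : transition `t` is enabled at marking `M`. -/
def Enabled (N : PTNet P Tr) (M : P → ℕ) (t : Tr) : Prop :=
  t ∈ N.transitions ∧ ∀ p ∈ N.places, N.pre t p ≤ M p

/-- The marking obtained by firing `t` at `M`. -/
def fire (N : PTNet P Tr) (M : P → ℕ) (t : Tr) : P → ℕ :=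
  fun p => if p ∈ N.places then M p + N.post t p - N.pre t p else M p

/-- `M[t⟩M'`. -/
def Fires (N : PTNet P Tr) (M : P → ℕ) (t : Tr) (M' : P → ℕ) : Prop :=
  N.Enabled M t ∧ M' = N.fire M t

/-- `M[s⟩M'` for a sequence `s` of transitions. -/
def FiresSeq (N : PTNet P Tr) : (P → ℕ) → List Tr → (P → ℕ) → Prop
  | M, [], M' => M' = M
  | M, t :: s, M' => ∃ M'', N.Fires M t M'' ∧ N.FiresSeq M'' s M'

/-- `M'` is reachable from `M`. -/
def Reachable (N : PTNet P Tr) (M M' : P → ℕ) : Prop :=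
  ∃ s, N.FiresSeq M s M'

/-- The restriction `N \ T'` of a net: the transitions in `T'` are removed. -/
def restrict (N : PTNet P Tr) (T' : Finset Tr) : PTNet P Tr where
  places := N.places
  transitions := N.transitions \ T'
  pre := fun t p => if t ∈ N.transitions \ T' then N.pre t p else 0
  post := fun t p => if t ∈ N.transitions \ T' then N.post t p else 0
  pre_eq_zero := by intro t ht p; simp [ht]
  post_eq_zero := by intro t ht p; simp [ht]

/-- The composition `N1 | N2` of two nets (intended for disjoint place sets);
shared transitions synchronize. -/
def comp (N1 N2 : PTNet P Tr) : PTNet P Tr where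
  places := N1.places ∪ N2.places
  transitions := N1.transitions ∪ N2.transitions
  pre := fun t p => if p ∈ N1.places then N1.pre t p else N2.pre t p
  post := fun t p => if p ∈ N1.places then N1.post t p else N2.post t p
  pre_eq_zero := by
    intro t ht p
    simp only [Finset.mem_union, not_or] at ht
    by_cases hp : p ∈ N1.places <;>
      simp [hp, N1.pre_eq_zero t ht.1, N2.pre_eq_zero t ht.2]
  post_eq_zero := by
    intro t ht p
    simp only [Finset.mem_union, not_or] at ht
    by_cases hp : p ∈ N1.places <;>
      simp [hp, N1.post_eq_zero t ht.1, N2.post_eq_zero t ht.2]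

/-- The union of two initial markings (agrees with `M1` on the places of `N1`,
with `M2` elsewhere). -/
def combine (N1 : PTNet P Tr) (M1 M2 : P → ℕ) : P → ℕ :=
  fun p => if p ∈ N1.places then M1 p else M2 p

/-- The reachability graph of a marked net, as an LTS on markings. -/
def toLTS (N : PTNet P Tr) (M0 : P → ℕ) : LTS (P → ℕ) Tr where
  init := M0
  tr := fun M t M' => N.Fires M t M'

/-- The language of the net system `(N, M0)` whose observable transitions are
those in `L` (labelled by themselves): projections of firing sequences onto `L*`. -/
def lang (N : PTNet P Tr) (M0 : P → ℕ) (L : Finset Tr) : Set (List Tr) :=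
  { w | ∃ s M, N.FiresSeq M0 s M ∧ s.filter (· ∈ L) = w }

/-- The free language of the net system `(N, M0)`: all of its firing sequences. -/
def freeLang (N : PTNet P Tr) (M0 : P → ℕ) : Set (List Tr) :=
  { s | ∃ M, N.FiresSeq M0 s M }

/-- The net with given places and transitions and empty flow. -/
def ofSets (Pl : Finset P) (Ts : Finset Tr) : PTNet P Tr where
  places := Pl
  transitions := Ts
  pre := fun _ _ => 0
  post := fun _ _ => 0
  pre_eq_zero := fun _ _ _ => rfl
  post_eq_zero := fun _ _ _ => rfl

end PTNet

/-! ## Non-interference properties -/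

section Security

variable {P Tr : Type _} [DecidableEq P] [DecidableEq Tr]

/-- Non-Deducibility on Compositions: for every high-level net system `N'`
(with any initial marking `M0'`) whose places are disjoint from those of `N` and
whose transitions avoid `L`, the systems `N \ H` and `(N | N') \ (H \ H')` are
language equivalent, the observable transitions being those in `L`. -/
def NDC (N : PTNet P Tr) (M0 : P → ℕ) (L H : Finset Tr) : Prop :=
  ∀ (N' : PTNet P Tr) (M0' : P → ℕ),
    Disjoint N.places N'.places → Disjoint N'.transitions L →
    (N.restrict H).lang M0 L =
      ((N.comp N').restrict (H \ N'.transitions)).lang (N.combine M0 M0') L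

/-- Bisimulation-based Non-Deducibility on Compositions: as `NDC`, but with
weak bisimilarity in place of language equivalence. -/
def BNDC (N : PTNet P Tr) (M0 : P → ℕ) (L H : Finset Tr) : Prop :=
  ∀ (N' : PTNet P Tr) (M0' : P → ℕ),
    Disjoint N.places N'.places → Disjoint N'.transitions L →
    WeaklyBisimilar (L : Set Tr) ((N.restrict H).toLTS M0)
      (((N.comp N').restrict (H \ N'.transitions)).toLTS (N.combine M0 M0'))

/-- Strong BNDC: whenever a reachable marking `M1` enables a high transition `h`
with `M1[h⟩M2`, the systems `(N \ H, M1)` and `(N \ H, M2)` are weakly bisimilar. -/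
def SBNDC (N : PTNet P Tr) (M0 : P → ℕ) (L H : Finset Tr) : Prop :=
  ∀ M1 h M2, N.Reachable M0 M1 → h ∈ H → N.Fires M1 h M2 →
    WeaklyBisimilar (L : Set Tr) ((N.restrict H).toLTS M1) ((N.restrict H).toLTS M2)

/-- The least relation generated from `M0 R M0` by:
(i) if `M1 R M2` and `M2[h⟩M2'` with `h ∈ H` then `M1 R M2'`;
(ii) if `M1 R M2`, `M1[l⟩M1'` (in `N \ H`) and `M2[l⟩M2'` with `l ∈ L`
then `M1' R M2'`. -/
inductive RRel (N : PTNet P Tr) (M0 : P → ℕ) (L H : Finset Tr) : (P → ℕ) → (P → ℕ) → Prop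
  | base : RRel N M0 L H M0 M0
  | high {M1 M2 M2' : P → ℕ} {h : Tr} : h ∈ H → RRel N M0 L H M1 M2 →
      N.Fires M2 h M2' → RRel N M0 L H M1 M2'
  | low {M1 M2 M1' M2' : P → ℕ} {l : Tr} : l ∈ L → RRel N M0 L H M1 M2 →
      (N.restrict H).Fires M1 l M1' → N.Fires M2 l M2' → RRel N M0 L H M1' M2'

/-- The property `P(h,l)`: for all `w ∈ (L ∪ H)*` and `s ∈ L*`, if `M0[w⟩M1`,
`M1[h⟩M2`, `M1[s⟩M3` and `M2[s⟩M4`, then `M3[l⟩` iff `M4[l⟩`. -/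
def PropP (N : PTNet P Tr) (M0 : P → ℕ) (L H : Finset Tr) (h l : Tr) : Prop :=
  ∀ (w s : List Tr) (M1 M2 M3 M4 : P → ℕ),
    (∀ t ∈ w, t ∈ L ∪ H) → (∀ t ∈ s, t ∈ L) →
    N.FiresSeq M0 w M1 → N.Fires M1 h M2 →
    N.FiresSeq M1 s M3 → N.FiresSeq M2 s M4 →
    (N.Enabled M3 l ↔ N.Enabled M4 l)

/-- Intransitive Non-Interference for a three-level net system:
`(N \ D, M)` has NDC (w.r.t. low `L`, high `H`) for `M = M0` and for every
marking `M` with `M0[υd⟩M` in `N`, `d ∈ D`. -/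
def INI (N : PTNet P Tr) (M0 : P → ℕ) (L D H : Finset Tr) : Prop :=
  NDC (N.restrict D) M0 L H ∧
  ∀ (υ : List Tr) (d : Tr) (M : P → ℕ), d ∈ D → N.FiresSeq M0 (υ ++ [d]) M →
    NDC (N.restrict D) M L H

/-- Bisimulation-based Intransitive Non-Interference: as `INI` with `BNDC`. -/
def BINI (N : PTNet P Tr) (M0 : P → ℕ) (L D H : Finset Tr) : Prop :=
  BNDC (N.restrict D) M0 L H ∧
  ∀ (υ : List Tr) (d : Tr) (M : P → ℕ), d ∈ D → N.FiresSeq M0 (υ ++ [d]) M →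
    BNDC (N.restrict D) M L H

/-- The property `Q(h,l)`: for all `χ ∈ T*` and `s ∈ L*`, if `M0[χ⟩M1`,
`M1[h⟩M2`, `M1[s⟩M3` and `M2[s⟩M4`, then `M3[l⟩` iff `M4[l⟩`. -/
def PropQ (N : PTNet P Tr) (M0 : P → ℕ) (L : Finset Tr) (h l : Tr) : Prop :=
  ∀ (χ s : List Tr) (M1 M2 M3 M4 : P → ℕ),
    (∀ t ∈ χ, t ∈ N.transitions) → (∀ t ∈ s, t ∈ L) →
    N.FiresSeq M0 χ M1 → N.Fires M1 h M2 →
    N.FiresSeq M1 s M3 → N.FiresSeq M2 s M4 →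
    (N.Enabled M3 l ↔ N.Enabled M4 l)

end Security

/-! A firing sequence of `N \ H` consists of low transitions, which a high-level net `N'` cannot
touch, so it replays in `(N | N') \ (H \ H')`; conversely, erasing the transitions of `N'` from a
firing sequence of the composition leaves a firing sequence of `N` with the same low projection.
Hence `L(N \ H) ⊆ L((N | N') \ (H \ H')) ⊆ L(N)` for every `N'`, which gives NDC once
`L(N) = L(N \ H)`. In the other direction, composing with the net with no places and
transitions `H` restores every high transition, so NDC for that `N'` reads `L(N \ H) = L(N)`. -/

namespace PTNet

variable {P Tr : Type _} [DecidableEq P] [DecidableEq Tr]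
  {N N' : PTNet P Tr} {T T' : Finset Tr} {M M' Mc Mc' : P → ℕ} {t : Tr} {s : List Tr}

theorem fires_restrict_iff : (N.restrict T).Fires M t M' ↔ t ∉ T ∧ N.Fires M t M' := by
  by_cases ht : t ∈ N.transitions \ T
  · rw [Finset.mem_sdiff] at ht
    have hfire : (N.restrict T).fire M t = N.fire M t := by
      funext p
      simp [fire, restrict, ht]
    rw [Fires, Fires, hfire]
    simp [Enabled, restrict, ht]
  · rw [Finset.mem_sdiff, not_and_or, not_not] at ht
    simp only [Fires, Enabled, restrict, Finset.mem_sdiff]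
    tauto

theorem firesSeq_restrict_iff :
    (N.restrict T).FiresSeq M s M' ↔ (∀ t ∈ s, t ∉ T) ∧ N.FiresSeq M s M' := by
  induction s generalizing M with
  | nil => simp [FiresSeq]
  | cons t s ih =>
    simp only [FiresSeq, fires_restrict_iff, ih, List.forall_mem_cons]
    constructor
    · rintro ⟨M'', ⟨htT, hf⟩, hsT, hs⟩
      exact ⟨⟨htT, hsT⟩, M'', hf, hs⟩
    · rintro ⟨⟨htT, hsT⟩, M'', hf, hs⟩
      exact ⟨M'', ⟨htT, hf⟩, hsT, hs⟩

theorem lang_restrict_subset (L : Finset Tr) : (N.restrict T).lang M L ⊆ N.lang M L :=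
  fun _ ⟨s, M', hs, hw⟩ => ⟨s, M', (firesSeq_restrict_iff.mp hs).2, hw⟩

theorem lang_restrict_empty (L : Finset Tr) : (N.restrict ∅).lang M L = N.lang M L := by
  refine (lang_restrict_subset L).antisymm fun _ ⟨s, M', hs, hw⟩ => ⟨s, M', ?_, hw⟩
  exact firesSeq_restrict_iff.mpr ⟨fun _ _ => Finset.notMem_empty _, hs⟩

omit [DecidableEq Tr] in
theorem eqOn_combine (M1 M2 : P → ℕ) : Set.EqOn (N.combine M1 M2) M1 N.places :=
  fun _ hp => if_pos hp

theorem comp_pre_of_mem {p : P} (hp : p ∈ N.places) : (N.comp N').pre t p = N.pre t p :=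
  if_pos hp

theorem comp_post_of_mem {p : P} (hp : p ∈ N.places) : (N.comp N').post t p = N.post t p :=
  if_pos hp

theorem eqOn_fire_comp (hM : Set.EqOn Mc M N.places) :
    Set.EqOn ((N.comp N').fire Mc t) (N.fire M t) N.places := by
  intro p (hp : p ∈ N.places)
  have hpC : p ∈ (N.comp N').places := Finset.mem_union_left _ hp
  simp only [fire, if_pos hp, if_pos hpC, comp_pre_of_mem hp, comp_post_of_mem hp, hM hp]

theorem eqOn_fire_comp_of_notMem (ht : t ∉ N.transitions) :
    Set.EqOn ((N.comp N').fire Mc t) Mc N.places := by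
  intro p (hp : p ∈ N.places)
  have hpC : p ∈ (N.comp N').places := Finset.mem_union_left _ hp
  simp only [fire, if_pos hpC, comp_pre_of_mem hp, comp_post_of_mem hp,
    N.pre_eq_zero t ht, N.post_eq_zero t ht, add_zero, Nat.sub_zero]

theorem Enabled.comp (h : N.Enabled M t) (hpre : ∀ p, N'.pre t p = 0)
    (hM : Set.EqOn Mc M N.places) : (N.comp N').Enabled Mc t := by
  refine ⟨Finset.mem_union_left _ h.1, fun p _ => ?_⟩
  by_cases hp : p ∈ N.places
  · rw [comp_pre_of_mem hp, hM hp]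
    exact h.2 p hp
  · show (if p ∈ N.places then _ else N'.pre t p) ≤ Mc p
    rw [if_neg hp, hpre]
    exact Nat.zero_le _

theorem Enabled.of_comp (h : (N.comp N').Enabled Mc t) (ht : t ∈ N.transitions)
    (hM : Set.EqOn M Mc N.places) : N.Enabled M t :=
  ⟨ht, fun p hp => by
    rw [hM hp, ← comp_pre_of_mem (N' := N') hp]
    exact h.2 p (Finset.mem_union_left _ hp)⟩

omit [DecidableEq Tr] in
theorem FiresSeq.mem_transitions (h : N.FiresSeq M s M') (ht : t ∈ s) : t ∈ N.transitions := by
  induction s generalizing M with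
  | nil => cases ht
  | cons u s ih =>
    obtain ⟨M'', hf, hs⟩ := h
    rcases List.mem_cons.mp ht with rfl | ht
    · exact hf.1.1
    · exact ih hs ht

theorem FiresSeq.comp (h : N.FiresSeq M s M') (hpre : ∀ t ∈ s, ∀ p, N'.pre t p = 0)
    (hM : Set.EqOn Mc M N.places) :
    ∃ Mc', (N.comp N').FiresSeq Mc s Mc' ∧ Set.EqOn Mc' M' N.places := by
  induction s generalizing M Mc with
  | nil => exact ⟨Mc, rfl, h ▸ hM⟩
  | cons t s ih =>
    obtain ⟨M'', ⟨hen, rfl⟩, hs⟩ := h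
    obtain ⟨Mc', hsc, hMc'⟩ :=
      ih hs (fun u hu => hpre u (List.mem_cons_of_mem t hu)) (eqOn_fire_comp hM)
    exact ⟨Mc', ⟨_, ⟨hen.comp (hpre t List.mem_cons_self) hM, rfl⟩, hsc⟩, hMc'⟩

theorem FiresSeq.of_comp (h : (N.comp N').FiresSeq Mc s Mc') (hM : Set.EqOn M Mc N.places) :
    ∃ M', N.FiresSeq M (s.filter (· ∈ N.transitions)) M' ∧ Set.EqOn M' Mc' N.places := by
  induction s generalizing M Mc with
  | nil => exact ⟨M, rfl, h ▸ hM⟩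
  | cons t s ih =>
    obtain ⟨Mc'', ⟨hen, rfl⟩, hs⟩ := h
    by_cases ht : t ∈ N.transitions
    · obtain ⟨M', hs', hM'⟩ := ih hs (eqOn_fire_comp hM.symm).symm
      rw [List.filter_cons_of_pos (by simpa using ht)]
      exact ⟨M', ⟨_, ⟨hen.of_comp ht hM, rfl⟩, hs'⟩, hM'⟩
    · obtain ⟨M', hs', hM'⟩ := ih hs (hM.trans (eqOn_fire_comp_of_notMem ht).symm)
      rw [List.filter_cons_of_neg (by simpa using ht)]
      exact ⟨M', hs', hM'⟩

theorem lang_restrict_subset_lang_comp_restrict (L : Finset Tr)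
    (hT : ∀ t ∈ N.transitions, t ∉ T → t ∉ T' ∧ ∀ p, N'.pre t p = 0)
    (hM : Set.EqOn Mc M N.places) :
    (N.restrict T).lang M L ⊆ ((N.comp N').restrict T').lang Mc L := by
  rintro _ ⟨s, M', hs, rfl⟩
  obtain ⟨hsT, hs⟩ := firesSeq_restrict_iff.mp hs
  have hsT' : ∀ t ∈ s, t ∉ T' ∧ ∀ p, N'.pre t p = 0 := fun t ht =>
    hT t (hs.mem_transitions ht) (hsT t ht)
  obtain ⟨Mc', hsc, -⟩ := hs.comp (fun t ht => (hsT' t ht).2) hM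
  exact ⟨s, Mc', firesSeq_restrict_iff.mpr ⟨fun t ht => (hsT' t ht).1, hsc⟩, rfl⟩

theorem lang_comp_subset {L : Finset Tr} (hL : L ⊆ N.transitions)
    (hM : Set.EqOn M Mc N.places) : (N.comp N').lang Mc L ⊆ N.lang M L := by
  rintro _ ⟨s, Mc', hs, rfl⟩
  obtain ⟨M', hs', -⟩ := hs.of_comp hM
  refine ⟨_, M', hs', ?_⟩
  rw [List.filter_filter]
  exact List.filter_congr fun t _ => by simpa using fun htL => hL htL

end PTNet

/-- a two-level net system has NDC iff `N` and `N \ H` are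
language equivalent. -/
theorem ndc_iff_lang_eq
    {P Tr : Type _} [DecidableEq P] [DecidableEq Tr]
    (N : PTNet P Tr) (M0 : P → ℕ) (L H : Finset Tr)
    (hT : N.transitions = L ∪ H) (hLH : Disjoint L H) :
    NDC N M0 L H ↔ N.lang M0 L = (N.restrict H).lang M0 L := by
  constructor
  · intro hndc
    have hequiv := hndc (PTNet.ofSets (∅ : Finset P) H) M0 (by simp [PTNet.ofSets])
      (by simpa [PTNet.ofSets] using hLH.symm)
    refine Set.Subset.antisymm ?_ (PTNet.lang_restrict_subset L)
    calc N.lang M0 L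
        = (N.restrict ∅).lang M0 L := (PTNet.lang_restrict_empty L).symm
      _ ⊆ ((N.comp (PTNet.ofSets ∅ H)).restrict (H \ H)).lang (N.combine M0 M0) L :=
        PTNet.lang_restrict_subset_lang_comp_restrict L (fun _ _ _ => ⟨by simp, fun _ => rfl⟩)
          (PTNet.eqOn_combine M0 M0)
      _ = (N.restrict H).lang M0 L := hequiv.symm
  · intro hequiv N' M0' _ hN'L
    have hLN : L ⊆ N.transitions := hT ▸ Finset.subset_union_left
    refine Set.Subset.antisymm ?_ ?_
    · refine PTNet.lang_restrict_subset_lang_comp_restrict L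
        (fun t htN htH => ⟨?_, fun p => ?_⟩) (PTNet.eqOn_combine M0 M0')
      · exact fun ht => htH (Finset.mem_sdiff.mp ht).1
      · have htL : t ∈ L := (Finset.mem_union.mp (hT ▸ htN)).resolve_right htH
        exact N'.pre_eq_zero t (Finset.disjoint_right.mp hN'L htL) p
    · calc ((N.comp N').restrict (H \ N'.transitions)).lang (N.combine M0 M0') L
          ⊆ (N.comp N').lang (N.combine M0 M0') L := PTNet.lang_restrict_subset L
        _ ⊆ N.lang M0 L := PTNet.lang_comp_subset hLN (PTNet.eqOn_combine M0 M0').symm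
        _ = (N.restrict H).lang M0 L := hequiv
end

section
/- Let N = (N₀,M0) be a two-level PT-net system with T = L ∪ H, and let R be the least relation generated from M0 R M0 by the rules: (i) if M1 R M2 and M2[h⟩M2' with h ∈ H then M1 R M2'; (ii) if M1 R M2, M1[l⟩M1' and M2[l⟩M2' with l ∈ L then M1' R M2'. Then N has the property BNDC if and only if for all reachable markings M1 of N₀\H and M2 of N, M1 R M2 entails L(N₀\H, M1) = L(N₀\H, M2). -/
/-!
For `⇐`, relate a marking `M₁` of `N \ H` to every marking of `(N | N') \ (H \ H')` whose
restriction to the places of `N` is `R`-related to `M₁`. This is a weak bisimulation: low moves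
are matched because `R`-related markings have the same firing sequences in `N \ H`, and the
remaining moves of the composition either leave the places of `N` untouched or are high moves
of `N`, which rule (i) absorbs.

For `⇒`, rule (ii) preserves equality of languages, so it suffices that a high step
`M₁[h⟩M₂` from a reachable marking preserves the language of `N \ H`. Compose `N` with a
gate: a fresh place holding `k` tokens, one of which every high transition consumes. Replaying a
run `M0[w⟩M₁` through the bisimulation with `k` the number of high transitions in `w` empties
the gate; from then on the composition behaves like `N \ H`, so `M₁` has the language of the
marking `Mw` that `N \ H` reaches by the low projection of `w`. With one token more, `h` can
still fire after the replay, which shows that `M₂` has the language of `Mw` as well.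
-/

namespace LTS

variable {Q A : Type _}

def Stable (S : LTS Q A) (Obs : Set A) (q : Q) : Prop :=
  ∀ q', ¬ S.TauStep Obs q q'

theorem TauStar.eq_of_stable {S : LTS Q A} {Obs : Set A} {q q' : Q} (hq : S.Stable Obs q)
    (h : S.TauStar Obs q q') : q' = q := by
  rcases Relation.ReflTransGen.cases_head h with h | ⟨q'', hstep, -⟩
  · exact h.symm
  · exact absurd hstep (hq q'')

end LTS

namespace IsWeakSimulation

variable {Q Q' A : Type _} {Obs : Set A} {S : LTS Q A} {S' : LTS Q' A} {R : Q → Q' → Prop}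
  {q₁ q₂ : Q} {q₁' : Q'}

theorem exists_tr_of_stable (hR : IsWeakSimulation Obs S S' R) (hr : R q₁ q₁') {σ : A}
    (hσ : σ ∈ Obs) (h : S.tr q₁ σ q₂) (hs : S'.Stable Obs q₁')
    (hs' : ∀ q, S'.tr q₁' σ q → S'.Stable Obs q) :
    ∃ q₂', S'.tr q₁' σ q₂' ∧ R q₂ q₂' := by
  obtain ⟨a, b, c, hqa, hab, hbc, hr'⟩ := (hR.2 q₁ q₁' hr).1 σ hσ q₂ h
  obtain rfl := hqa.eq_of_stable hs
  obtain rfl := hbc.eq_of_stable (hs' b hab)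
  exact ⟨c, hab, hr'⟩

theorem rel_of_tr_of_stable (hR : IsWeakSimulation Obs S S' R) (hr : R q₁ q₁') {τ : A}
    (hτ : τ ∉ Obs) (h : S.tr q₁ τ q₂) (hs : S'.Stable Obs q₁') : R q₂ q₁' := by
  obtain ⟨c, hc, hr'⟩ := (hR.2 q₁ q₁' hr).2 τ hτ q₂ h
  rwa [hc.eq_of_stable hs] at hr'

end IsWeakSimulation

namespace PTNet

variable {P Tr : Type _} {N N' : PTNet P Tr} {M M' Y q q' : P → ℕ} {t : Tr}

theorem Enabled.congr (h : N.Enabled M t) (hM : Set.EqOn M M' N.places) : N.Enabled M' t :=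
  ⟨h.1, fun p hp => hM hp ▸ h.2 p hp⟩

variable [DecidableEq P]

theorem Fires.eq {M₁ M₂ : P → ℕ} (h₁ : N.Fires M t M₁) (h₂ : N.Fires M t M₂) :
    M₁ = M₂ :=
  h₁.2.trans h₂.2.symm

theorem FiresSeq.eq : ∀ {s : List Tr} {M M₁ M₂ : P → ℕ},
    N.FiresSeq M s M₁ → N.FiresSeq M s M₂ → M₁ = M₂
  | [], _, _, _, h₁, h₂ => h₁.trans h₂.symm
  | _ :: _, _, _, _, ⟨_, hf₁, hs₁⟩, ⟨_, hf₂, hs₂⟩ => by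
    cases hf₁.eq hf₂
    exact hs₁.eq hs₂

theorem FiresSeq.concat : ∀ {s : List Tr} {M M' M'' : P → ℕ},
    N.FiresSeq M s M' → N.Fires M' t M'' → N.FiresSeq M (s ++ [t]) M''
  | [], _, _, _, rfl, hf => ⟨_, hf, rfl⟩
  | _ :: _, _, _, _, ⟨X, hf, hs⟩, hf' => ⟨X, hf, hs.concat hf'⟩

theorem Reachable.tail {M'' : P → ℕ} (h : N.Reachable M M') (hf : N.Fires M' t M'') :
    N.Reachable M M'' :=
  let ⟨s, hs⟩ := h
  ⟨s ++ [t], hs.concat hf⟩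

theorem eqOn_fire (hM : Set.EqOn M M' N.places) :
    Set.EqOn (N.fire M t) (N.fire M' t) N.places := by
  intro p hp
  simp [fire, Finset.mem_coe.1 hp, hM hp]

theorem fire_eq_self (ht : t ∉ N.transitions) : N.fire M t = M := by
  funext p
  simp [fire, N.pre_eq_zero t ht, N.post_eq_zero t ht]

theorem freeLang_subset_of_simulation {N' : PTNet P Tr} (R : (P → ℕ) → (P → ℕ) → Prop)
    (hsim : ∀ M Y t M', R M Y → N.Fires M t M' → ∃ Y', N'.Fires Y t Y' ∧ R M' Y')
    (hMY : R M Y) : N.freeLang M ⊆ N'.freeLang Y := by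
  intro s
  induction s generalizing M Y with
  | nil => exact fun _ => ⟨Y, rfl⟩
  | cons t s ih =>
    rintro ⟨X, M', hf, hs⟩
    obtain ⟨Y', hf', hR'⟩ := hsim M Y t M' hMY hf
    obtain ⟨Z, hZ⟩ := ih hR' ⟨X, hs⟩
    exact ⟨Z, Y', hf', hZ⟩

theorem singleton_mem_freeLang : [t] ∈ N.freeLang M ↔ ∃ M', N.Fires M t M' :=
  ⟨fun ⟨_, M', hf, _⟩ => ⟨M', hf⟩, fun ⟨M', hf⟩ => ⟨M', M', hf, rfl⟩⟩

theorem Fires.freeLang_eq (h : N.Fires M t M') : N.freeLang M' = {s | t :: s ∈ N.freeLang M} := by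
  ext s
  exact ⟨fun ⟨X, hX⟩ => ⟨X, M', h, hX⟩,
    fun ⟨X, _, hf, hs⟩ => ⟨X, hf.eq h ▸ hs⟩⟩

theorem eqOn_combine_left : Set.EqOn (N.combine M M') M N.places :=
  fun _ hp => if_pos hp

variable [DecidableEq Tr]

theorem restrict_fires_iff {T' : Finset Tr} :
    (N.restrict T').Fires M t M' ↔ t ∉ T' ∧ N.Fires M t M' := by
  by_cases ht : t ∈ N.transitions \ T'
  · have hpre : ∀ p, (N.restrict T').pre t p = N.pre t p := fun _ => if_pos ht
    have hfire : (N.restrict T').fire M t = N.fire M t := by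
      funext p
      simp only [fire, restrict, if_pos ht]
    simp only [Fires, Enabled, hfire, hpre]
    rw [Finset.mem_sdiff] at ht
    exact ⟨fun h => ⟨ht.2, ⟨ht.1, h.1.2⟩, h.2⟩,
      fun h => ⟨⟨Finset.mem_sdiff.2 ht, h.2.1.2⟩, h.2.2⟩⟩
  · exact ⟨fun h => absurd h.1.1 ht,
      fun ⟨hT', hN⟩ => absurd (Finset.mem_sdiff.2 ⟨hN.1.1, hT'⟩) ht⟩

theorem comp_fire : (N.comp N').fire q t = N.combine (N.fire q t) (N'.fire q t) := by
  funext p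
  by_cases h₁ : p ∈ N.places <;> by_cases h₂ : p ∈ N'.places <;>
    simp [fire, comp, combine, h₁, h₂]

theorem comp_enabled_iff (hd : Disjoint N.places N'.places) :
    (N.comp N').Enabled q t ↔ t ∈ N.transitions ∪ N'.transitions ∧
      (t ∈ N.transitions → N.Enabled q t) ∧ (t ∈ N'.transitions → N'.Enabled q t) := by
  simp only [Enabled, comp, Finset.mem_union]
  constructor
  · rintro ⟨ht, hpre⟩
    refine ⟨ht, fun ht₁ => ⟨ht₁, fun p hp => ?_⟩,
      fun ht₂ => ⟨ht₂, fun p hp => ?_⟩⟩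
    · simpa [hp] using hpre p (Or.inl hp)
    · simpa [Finset.disjoint_right.1 hd hp] using hpre p (Or.inr hp)
  · rintro ⟨ht, h₁, h₂⟩
    refine ⟨ht, fun p hp => ?_⟩
    split_ifs with hp₁
    · by_cases ht₁ : t ∈ N.transitions
      · exact (h₁ ht₁).2 p hp₁
      · simp [N.pre_eq_zero t ht₁]
    · by_cases ht₂ : t ∈ N'.transitions
      · exact (h₂ ht₂).2 p (hp.resolve_left hp₁)
      · simp [N'.pre_eq_zero t ht₂]

theorem Fires.eqOn_fire_of_comp (h : (N.comp N').Fires q t q') (hq : Set.EqOn q M N.places) :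
    Set.EqOn q' (N.fire M t) N.places := by
  rw [h.2, comp_fire]
  exact eqOn_combine_left.trans (eqOn_fire hq)

theorem Fires.of_comp (hd : Disjoint N.places N'.places) (h : (N.comp N').Fires q t q')
    (hq : Set.EqOn q M N.places) (ht : t ∈ N.transitions) : N.Fires M t (N.fire M t) :=
  ⟨(((comp_enabled_iff hd).1 h.1).2.1 ht).congr hq, rfl⟩

theorem exists_comp_fires (hd : Disjoint N.places N'.places) (h : N.Fires M t M')
    (hq : Set.EqOn q M N.places) (h' : t ∈ N'.transitions → N'.Enabled q t) :
    ∃ q', (N.comp N').Fires q t q' ∧ Set.EqOn q' M' N.places := by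
  refine ⟨_, ⟨(comp_enabled_iff hd).2 ⟨Finset.mem_union_left _ h.1.1,
    fun _ => h.1.congr hq.symm, h'⟩, rfl⟩, ?_⟩
  rw [comp_fire, h.2]
  exact eqOn_combine_left.trans (eqOn_fire hq)

end PTNet

section TwoLevel

open PTNet

variable {P Tr : Type _} [DecidableEq P] [DecidableEq Tr] {N N' : PTNet P Tr}
  {M0 M M' M₁ M₂ M₁' q q' : P → ℕ} {L H : Finset Tr} {t : Tr}

theorem restrict_fires_iff_of_mem (hLH : Disjoint L H) (ht : t ∈ L) :
    (N.restrict H).Fires M t M' ↔ N.Fires M t M' := by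
  rw [restrict_fires_iff]
  exact and_iff_right (Finset.disjoint_left.1 hLH ht)

theorem mem_of_restrict_fires (hT : N.transitions = L ∪ H) (hLH : Disjoint L H)
    (h : (N.restrict H).Fires M t M') : t ∈ L := by
  have ht : t ∈ N.transitions \ H := h.1.1
  rwa [hT, Finset.union_sdiff_cancel_right hLH] at ht

theorem restrict_stable (hT : N.transitions = L ∪ H) (hLH : Disjoint L H) :
    ((N.restrict H).toLTS M0).Stable L M :=
  fun _ ⟨_, hτ, h⟩ => hτ (mem_of_restrict_fires hT hLH h)

theorem RRel.reachable (h : RRel N M0 L H M₁ M₂) :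
    (N.restrict H).Reachable M0 M₁ ∧ N.Reachable M0 M₂ := by
  induction h with
  | base => exact ⟨⟨[], rfl⟩, ⟨[], rfl⟩⟩
  | high _ _ hf ih => exact ⟨ih.1, ih.2.tail hf⟩
  | low _ _ hf₁ hf₂ ih => exact ⟨ih.1.tail hf₁, ih.2.tail hf₂⟩

theorem RRel.freeLang_eq (hLH : Disjoint L H)
    (hhigh : ∀ M h M', N.Reachable M0 M → h ∈ H → N.Fires M h M' →
      (N.restrict H).freeLang M = (N.restrict H).freeLang M')
    (h : RRel N M0 L H M₁ M₂) :
    (N.restrict H).freeLang M₁ = (N.restrict H).freeLang M₂ := by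
  induction h with
  | base => rfl
  | high hh hr hf ih => exact ih.trans (hhigh _ _ _ hr.reachable.2 hh hf)
  | low hl _ hf₁ hf₂ ih =>
    rw [hf₁.freeLang_eq, ((restrict_fires_iff_of_mem hLH hl).2 hf₂).freeLang_eq, ih]

theorem RRel.exists_comp_fires (hLH : Disjoint L H) (hd : Disjoint N.places N'.places)
    (hdt : Disjoint N'.transitions L)
    (hR : ∀ M₁ M₂, RRel N M0 L H M₁ M₂ →
      (N.restrict H).freeLang M₁ = (N.restrict H).freeLang M₂)
    (hr : RRel N M0 L H M₁ M₂) (hq : Set.EqOn q M₂ N.places)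
    (hf : (N.restrict H).Fires M₁ t M₁') (ht : t ∈ L) :
    ∃ q' M₂', ((N.comp N').restrict (H \ N'.transitions)).Fires q t q' ∧
      RRel N M0 L H M₁' M₂' ∧ Set.EqOn q' M₂' N.places := by
  obtain ⟨M₂', hf₂⟩ :=
    singleton_mem_freeLang.1 (hR _ _ hr ▸ singleton_mem_freeLang.2 ⟨_, hf⟩)
  have hf₂' := (restrict_fires_iff_of_mem hLH ht).1 hf₂
  obtain ⟨q', hq'f, hq'⟩ := PTNet.exists_comp_fires (N' := N') hd hf₂' hq
    fun ht' => absurd ht (Finset.disjoint_left.1 hdt ht')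
  exact ⟨q', M₂', restrict_fires_iff.2
    ⟨fun h => Finset.disjoint_left.1 hLH ht (Finset.mem_sdiff.1 h).1, hq'f⟩,
    hr.low ht hf hf₂', hq'⟩

theorem RRel.exists_restrict_fires (hT : N.transitions = L ∪ H) (hLH : Disjoint L H)
    (hd : Disjoint N.places N'.places)
    (hR : ∀ M₁ M₂, RRel N M0 L H M₁ M₂ →
      (N.restrict H).freeLang M₁ = (N.restrict H).freeLang M₂)
    (hr : RRel N M0 L H M₁ M₂) (hq : Set.EqOn q M₂ N.places)
    (hf : ((N.comp N').restrict (H \ N'.transitions)).Fires q t q') (ht : t ∈ L) :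
    ∃ M₁' M₂', (N.restrict H).Fires M₁ t M₁' ∧
      RRel N M0 L H M₁' M₂' ∧ Set.EqOn q' M₂' N.places := by
  have hc := (restrict_fires_iff.1 hf).2
  have hf₂ := hc.of_comp hd hq (hT ▸ Finset.mem_union_left H ht)
  obtain ⟨M₁', hf₁⟩ := singleton_mem_freeLang.1
    ((hR _ _ hr).symm ▸
      singleton_mem_freeLang.2 ⟨_, (restrict_fires_iff_of_mem hLH ht).2 hf₂⟩)
  exact ⟨M₁', _, hf₁, hr.low ht hf₁ hf₂, hc.eqOn_fire_of_comp hq⟩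

theorem RRel.of_comp_fires_of_not_mem (hT : N.transitions = L ∪ H)
    (hd : Disjoint N.places N'.places) (hr : RRel N M0 L H M₁ M₂)
    (hq : Set.EqOn q M₂ N.places)
    (hf : ((N.comp N').restrict (H \ N'.transitions)).Fires q t q') (ht : t ∉ L) :
    ∃ M₂', RRel N M0 L H M₁ M₂' ∧ Set.EqOn q' M₂' N.places := by
  have hc := (restrict_fires_iff.1 hf).2
  refine ⟨N.fire M₂ t, ?_, hc.eqOn_fire_of_comp hq⟩
  by_cases htN : t ∈ N.transitions
  · have hh : t ∈ H := (Finset.mem_union.1 (hT ▸ htN)).resolve_left ht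
    exact hr.high hh (hc.of_comp hd hq htN)
  · rwa [fire_eq_self htN]

theorem bndc_of_forall_rrel (hT : N.transitions = L ∪ H) (hLH : Disjoint L H)
    (hR : ∀ M₁ M₂, RRel N M0 L H M₁ M₂ →
      (N.restrict H).freeLang M₁ = (N.restrict H).freeLang M₂) :
    BNDC N M0 L H := by
  intro N' M0' hd hdt
  have hinit : Set.EqOn (N.combine M0 M0') M0 N.places := eqOn_combine_left
  refine ⟨fun M₁ q => ∃ M₂, RRel N M0 L H M₁ M₂ ∧ Set.EqOn q M₂ N.places,
    ⟨⟨M0, .base, hinit⟩, ?_⟩, ⟨M0, .base, hinit⟩, ?_⟩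
  · rintro M₁ q ⟨M₂, hr, hq⟩
    refine ⟨fun σ hσ M₁' hf => ?_,
      fun τ hτ M₁' hf => absurd (mem_of_restrict_fires hT hLH hf) hτ⟩
    obtain ⟨q', M₂', hq'f, hr', hq'⟩ := hr.exists_comp_fires hLH hd hdt hR hq hf hσ
    exact ⟨q, q', q', .refl, hq'f, .refl, M₂', hr', hq'⟩
  · rintro q M₁ ⟨M₂, hr, hq⟩
    refine ⟨fun σ hσ q' hf => ?_,
      fun τ hτ q' hf => ⟨M₁, .refl, hr.of_comp_fires_of_not_mem hT hd hq hf hτ⟩⟩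
    obtain ⟨M₁', M₂', hf₁, hr', hq'⟩ := hr.exists_restrict_fires hT hLH hd hR hq hf hσ
    exact ⟨M₁, M₁', M₁', .refl, hf₁, .refl, M₂', hr', hq'⟩

end TwoLevel

section Gate

open PTNet

variable {P Tr : Type _} [DecidableEq Tr] {N : PTNet P Tr} {L H : Finset Tr}
  {p : P} {M0 M M' X q q' : P → ℕ} {t : Tr}

def gateNet (p : P) (H : Finset Tr) : PTNet P Tr where
  places := {p}
  transitions := H
  pre t _ := if t ∈ H then 1 else 0
  post _ _ := 0
  pre_eq_zero _ ht _ := if_neg ht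
  post_eq_zero _ _ _ := rfl

theorem disjoint_places_gateNet (hp : p ∉ N.places) : Disjoint N.places (gateNet p H).places :=
  Finset.disjoint_singleton_right.2 hp

variable [DecidableEq P]

abbrev gated (N : PTNet P Tr) (p : P) (H : Finset Tr) : PTNet P Tr :=
  (N.comp (gateNet p H)).restrict (H \ (gateNet p H).transitions)

theorem gated_fires_iff : (gated N p H).Fires q t q' ↔ (N.comp (gateNet p H)).Fires q t q' :=
  restrict_fires_iff.trans (and_iff_right (by simp [gateNet]))

theorem mem_transitions_of_gated_fires (hT : N.transitions = L ∪ H)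
    (h : (gated N p H).Fires q t q') : t ∈ N.transitions := by
  have ht : t ∈ (N.transitions ∪ H) \ (H \ H) := h.1.1
  rw [Finset.mem_sdiff] at ht
  simp only [hT, Finset.mem_union] at ht ⊢
  tauto

theorem gate_add_of_gated_fires (hp : p ∉ N.places) (h : (gated N p H).Fires q t q') :
    q' p + (if t ∈ H then 1 else 0) = q p := by
  have hc := gated_fires_iff.1 h
  have hen : t ∈ H → 1 ≤ q p := fun ht => by
    simpa [gateNet, ht] using
      (((comp_enabled_iff (disjoint_places_gateNet hp)).1 hc.1).2.2 ht).2 p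
        (Finset.mem_singleton_self p)
  have hq' : q' p = q p - if t ∈ H then 1 else 0 := by
    rw [hc.2, comp_fire]
    simp [combine, hp, fire, gateNet]
  split_ifs at hq' ⊢ with ht
  · have := hen ht
    omega
  · omega

theorem gated_stable (hT : N.transitions = L ∪ H) (hp : p ∉ N.places) (hq : q p = 0) :
    ((gated N p H).toLTS X).Stable L q := by
  rintro q' ⟨τ, hτ, h⟩
  have hτH : τ ∈ H := by
    have := mem_transitions_of_gated_fires hT h
    rw [hT, Finset.mem_union] at this
    exact this.resolve_left hτ
  have := gate_add_of_gated_fires hp h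
  simp [hτH, hq] at this

theorem exists_gated_fires (hp : p ∉ N.places) (h : N.Fires M t M')
    (hq : Set.EqOn q M N.places) (hg : t ∈ H → 1 ≤ q p) :
    ∃ q', (gated N p H).Fires q t q' ∧ Set.EqOn q' M' N.places := by
  obtain ⟨q', hf, hq'⟩ := exists_comp_fires (disjoint_places_gateNet hp) h hq
    fun ht => by
      have ht' : t ∈ H := ht
      exact ⟨ht, by simpa [gateNet, ht'] using hg ht'⟩
  exact ⟨q', gated_fires_iff.2 hf, hq'⟩

theorem PTNet.Fires.of_gated (hT : N.transitions = L ∪ H) (hp : p ∉ N.places)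
    (h : (gated N p H).Fires q t q') (hq : Set.EqOn q M N.places) :
    ∃ M', N.Fires M t M' ∧ Set.EqOn q' M' N.places :=
  have hc := gated_fires_iff.1 h
  ⟨_, hc.of_comp (disjoint_places_gateNet hp) hq (mem_transitions_of_gated_fires hT h),
    hc.eqOn_fire_of_comp hq⟩

theorem freeLang_eq_of_gate_empty (hT : N.transitions = L ∪ H) (hLH : Disjoint L H)
    (hp : p ∉ N.places) {B : (P → ℕ) → (P → ℕ) → Prop}
    (hB : IsWeakBisimulation L ((N.restrict H).toLTS M0) ((gated N p H).toLTS X) B)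
    (hr : B M q) (hq : q p = 0) (hqM' : Set.EqOn q M' N.places) :
    (N.restrict H).freeLang M = (N.restrict H).freeLang M' := by
  have hstay : ∀ {q q' t}, (gated N p H).Fires q t q' → t ∈ L → q' p = q p := fun h ht => by
    simpa [Finset.disjoint_left.1 hLH ht] using gate_add_of_gated_fires hp h
  let R M Y := ∃ q, B M q ∧ q p = 0 ∧ Set.EqOn q Y N.places
  refine (freeLang_subset_of_simulation R ?_ ⟨q, hr, hq, hqM'⟩).antisymm
    (freeLang_subset_of_simulation (fun Y M => R M Y) ?_ ⟨q, hr, hq, hqM'⟩)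
  · rintro M Y t M₁ ⟨q, hr, hq, hqY⟩ hf
    have ht := mem_of_restrict_fires hT hLH hf
    obtain ⟨q₁, hq₁f, hr₁⟩ := hB.1.exists_tr_of_stable hr ht hf (gated_stable hT hp hq)
      fun q₁ hq₁f => gated_stable hT hp ((hstay hq₁f ht).trans hq)
    obtain ⟨Y₁, hY₁f, hq₁Y⟩ := hq₁f.of_gated hT hp hqY
    exact ⟨Y₁, (restrict_fires_iff_of_mem hLH ht).2 hY₁f, q₁, hr₁,
      (hstay hq₁f ht).trans hq, hq₁Y⟩
  · rintro Y M t Y₁ ⟨q, hr, hq, hqY⟩ hf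
    have ht := mem_of_restrict_fires hT hLH hf
    obtain ⟨q₁, hq₁f, hq₁Y⟩ :=
      exists_gated_fires hp ((restrict_fires_iff_of_mem hLH ht).1 hf) hqY
        fun hh => absurd hh (Finset.disjoint_left.1 hLH ht)
    obtain ⟨M₁, hM₁f, hr₁⟩ :=
      hB.2.exists_tr_of_stable hr ht hq₁f (restrict_stable hT hLH)
        fun _ _ => restrict_stable hT hLH
    exact ⟨M₁, hM₁f, q₁, hr₁, (hstay hq₁f ht).trans hq, hq₁Y⟩

theorem exists_rel_of_firesSeq (hT : N.transitions = L ∪ H) (hLH : Disjoint L H)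
    (hp : p ∉ N.places) {B : (P → ℕ) → (P → ℕ) → Prop}
    (hB : IsWeakBisimulation L ((N.restrict H).toLTS M0) ((gated N p H).toLTS X) B) :
    ∀ {w : List Tr} {M M₁ Mw q : P → ℕ} {k : ℕ}, N.FiresSeq M w M₁ → B Mw q →
      Set.EqOn q M N.places → q p = w.countP (· ∈ H) + k →
      ∃ Mw' q', (N.restrict H).FiresSeq Mw (w.filter (· ∈ L)) Mw' ∧ B Mw' q' ∧
        Set.EqOn q' M₁ N.places ∧ q' p = k
  | [], _, _, Mw, q, _, hs, hr, hq, hk => ⟨Mw, q, rfl, hr, hs ▸ hq, by simpa using hk⟩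
  | t :: w, _, _, _, _, k, ⟨_, hf, hs⟩, hr, hq, hk => by
    obtain ⟨q', hq'f, hq'⟩ := exists_gated_fires hp hf hq fun (ht : t ∈ H) => by
      simp [ht] at hk
      omega
    have hgate := gate_add_of_gated_fires hp hq'f
    rcases Finset.mem_union.1 (hT ▸ hf.1.1) with htL | htH
    · have htH : t ∉ H := Finset.disjoint_left.1 hLH htL
      obtain ⟨Mw₁, hMw₁f, hr₁⟩ :=
        hB.2.exists_tr_of_stable hr htL hq'f (restrict_stable hT hLH)
          fun _ _ => restrict_stable hT hLH
      obtain ⟨Mw', q'', hs', hr', hq'', hk'⟩ :=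
        exists_rel_of_firesSeq hT hLH hp hB (k := k) hs hr₁ hq'
        (by simp [htH] at hk hgate; omega)
      refine ⟨Mw', q'', ?_, hr', hq'', hk'⟩
      rw [List.filter_cons_of_pos (by simpa using htL)]
      exact ⟨Mw₁, hMw₁f, hs'⟩
    · have htL : t ∉ L := Finset.disjoint_right.1 hLH htH
      have hr₁ := hB.2.rel_of_tr_of_stable hr htL hq'f (restrict_stable hT hLH)
      obtain ⟨Mw', q'', hs', hr', hq'', hk'⟩ :=
        exists_rel_of_firesSeq hT hLH hp hB (k := k) hs hr₁ hq'
        (by simp [htH] at hk hgate; omega)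
      refine ⟨Mw', q'', ?_, hr', hq'', hk'⟩
      rwa [List.filter_cons_of_neg (by simpa using htL)]

end Gate

section Main

open PTNet

variable {P Tr : Type _} [DecidableEq P] [DecidableEq Tr] {N : PTNet P Tr} {L H : Finset Tr}
  {M0 M₁ M₂ : P → ℕ} {h : Tr}

theorem BNDC.freeLang_eq_of_fires_high [Infinite P] (hT : N.transitions = L ∪ H)
    (hLH : Disjoint L H) (hbndc : BNDC N M0 L H) (hM₁ : N.Reachable M0 M₁) (hh : h ∈ H)
    (hf : N.Fires M₁ h M₂) : (N.restrict H).freeLang M₁ = (N.restrict H).freeLang M₂ := by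
  obtain ⟨w, hw⟩ := hM₁
  obtain ⟨p, hp⟩ := Infinite.exists_notMem_finset N.places
  have replay : ∀ k, ∃ X B Mw q,
      IsWeakBisimulation L ((N.restrict H).toLTS M0) ((gated N p H).toLTS X) B ∧
      (N.restrict H).FiresSeq M0 (w.filter (· ∈ L)) Mw ∧ B Mw q ∧
      Set.EqOn q M₁ N.places ∧ q p = k := by
    intro k
    obtain ⟨B, hB⟩ := hbndc (gateNet p H) (fun _ => w.countP (· ∈ H) + k)
      (disjoint_places_gateNet hp) hLH.symm
    obtain ⟨Mw, q, hMw, hr, hq, hqk⟩ := exists_rel_of_firesSeq hT hLH hp hB hw hB.1.1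
      eqOn_combine_left (if_neg hp)
    exact ⟨_, B, Mw, q, hB, hMw, hr, hq, hqk⟩
  obtain ⟨_, B, Mw, q, hB, hMw, hr, hq, hq0⟩ := replay 0
  obtain ⟨_, B', Mw', q', hB', hMw', hr', hq', hq1⟩ := replay 1
  obtain rfl := hMw'.eq hMw
  obtain ⟨q'', hf', hq''⟩ := exists_gated_fires (H := H) hp hf hq' fun _ => hq1.ge
  have hq''0 : q'' p = 0 := by simpa [hh, hq1] using gate_add_of_gated_fires hp hf'
  have hr'' : B' Mw' q'' :=
    hB'.2.rel_of_tr_of_stable hr' (Finset.disjoint_right.1 hLH hh) hf' (restrict_stable hT hLH)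
  exact (freeLang_eq_of_gate_empty hT hLH hp hB hr hq0 hq).symm.trans
    (freeLang_eq_of_gate_empty hT hLH hp hB' hr'' hq''0 hq'')

end Main

/-- `N` has BNDC iff for all reachable markings `M1` of `N \ H`
and `M2` of `N`, `M1 R M2` entails `L(N\H, M1) = L(N\H, M2)`. -/
theorem bndc_iff_rrel_lang_eq
    {P Tr : Type _} [DecidableEq P] [DecidableEq Tr] [Infinite P]
    (N : PTNet P Tr) (M0 : P → ℕ) (L H : Finset Tr)
    (hT : N.transitions = L ∪ H) (hLH : Disjoint L H) :
    BNDC N M0 L H ↔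
      ∀ M1 M2 : P → ℕ, (N.restrict H).Reachable M0 M1 → N.Reachable M0 M2 →
        RRel N M0 L H M1 M2 →
        (N.restrict H).freeLang M1 = (N.restrict H).freeLang M2 := by
  refine ⟨fun hbndc M1 M2 _ _ hR => ?_, fun hyp => ?_⟩
  · exact hR.freeLang_eq hLH fun _ _ _ hM hh hf =>
      hbndc.freeLang_eq_of_fires_high hT hLH hM hh hf
  · exact bndc_of_forall_rrel hT hLH fun M1 M2 hR =>
      hyp M1 M2 hR.reachable.1 hR.reachable.2 hR
end
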